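/- Let Γ be a graph with at least 7 vertices and at least 5 vertices of degree ≥ 6, and let v ≡ 0 or 3 (mod 4). Then every (K_v,Γ)-design can be down-linked to a (K_{v-3},P₃)-design. -/

import Mathlib

/-!
Write `n = v - 3`. In every block, one of the five vertices of degree `≥ 6` avoids the four
vertices `0, n, n + 1, n + 2`, and two of its neighbours avoid them too; this gives a cherry
`P₃` in each block, inside `K_n` and away from the vertex `0`. These cherries are pairwise
edge-disjoint, and as `n ≡ 0, 1 (mod 4)` the graph `L` of the remaining edges of `K_n` has an
even number of edges. In `L` the vertex `0` is adjacent to every other non-isolated vertex, and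
a finite graph with an even number of edges and such a hub always decomposes into cherries:
one can remove two adjacent edges so that the hub property persists, and induct.
-/

open SimpleGraph

/-- The complete graph on the set `s` of natural numbers, viewed as a graph on `ℕ`. -/
def Kon (s : Set ℕ) : SimpleGraph ℕ where
  Adj x y := x ≠ y ∧ x ∈ s ∧ y ∈ s
  symm := ⟨fun x y ⟨h, hx, hy⟩ => ⟨h.symm, hy, hx⟩⟩
  loopless := ⟨fun x h => h.1 rfl⟩

/-- `B` is a copy of `Γ`: there is an injection of vertices under which the
edges of `B` are exactly the images of the edges of `Γ`. -/
def IsCopy {α β : Type*} (Γ : SimpleGraph α) (B : SimpleGraph β) : Prop :=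
  ∃ φ : α ↪ β, ∀ x y : β, B.Adj x y ↔ ∃ a b, Γ.Adj a b ∧ φ a = x ∧ φ b = y

/-- A `(G, Γ)`-design: a set of copies of `Γ`, each a subgraph of `G` with
nonempty edge set, whose edge sets partition the edge set of `G`. -/
def IsDesign {α β : Type*} (G : SimpleGraph β) (Γ : SimpleGraph α)
    (D : Set (SimpleGraph β)) : Prop :=
  (∀ B ∈ D, B ≤ G ∧ IsCopy Γ B ∧ B.edgeSet.Nonempty) ∧
  ∀ e ∈ G.edgeSet, ∃! B, B ∈ D ∧ e ∈ B.edgeSet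

/-- A down-link from the design `D` to the design `D'`: each block is mapped
to a subgraph of itself. -/
def IsDownlink {β : Type*} (D D' : Set (SimpleGraph β))
    (f : SimpleGraph β → SimpleGraph β) : Prop :=
  ∀ B ∈ D, f B ∈ D' ∧ f B ≤ B


section Designs

variable {α β : Type*} {Γ : SimpleGraph α} {B G G₁ G₂ : SimpleGraph β}
  {D D₁ D₂ : Set (SimpleGraph β)}

theorem isCopy_iff_exists_map_eq : IsCopy Γ B ↔ ∃ φ : α ↪ β, Γ.map φ = B := by
  simp only [IsCopy, SimpleGraph.ext_iff, funext_iff, map_adj, eq_iff_iff,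
    eq_comm (b := B.Adj _ _)]

theorem IsCopy.ncard_edgeSet (h : IsCopy Γ B) : B.edgeSet.ncard = Γ.edgeSet.ncard := by
  obtain ⟨φ, rfl⟩ := isCopy_iff_exists_map_eq.mp h
  rw [edgeSet_map, Set.ncard_image_of_injective _ φ.sym2Map.injective]

theorem IsCopy.exists_cherry_avoiding [Fintype α] [DecidableRel Γ.Adj] (hB : IsCopy Γ B)
    {S : Finset β} {d : ℕ} (hSd : S.card + 2 ≤ d)
    (hS : S.card < (Finset.univ.filter fun a => d ≤ Γ.degree a).card) :
    ∃ c x y, c ∉ S ∧ x ∉ S ∧ y ∉ S ∧ x ≠ y ∧ B.Adj c x ∧ B.Adj c y := by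
  classical
  obtain ⟨φ, hφ⟩ := hB
  have hadj : ∀ {a b}, Γ.Adj a b → B.Adj (φ a) (φ b) := fun hab =>
    (hφ _ _).mpr ⟨_, _, hab, rfl, rfl⟩
  obtain ⟨_, hc, hcS⟩ := Finset.exists_mem_notMem_of_card_lt_card (s := S)
    (t := (Finset.univ.filter fun a => d ≤ Γ.degree a).map φ) (by rwa [Finset.card_map])
  obtain ⟨a, ha, rfl⟩ := Finset.mem_map.mp hc
  have hnbr : 1 < ((Γ.neighborFinset a).map φ \ S).card := by
    have := Finset.le_card_sdiff S ((Γ.neighborFinset a).map φ)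
    rw [Finset.card_map, card_neighborFinset_eq_degree] at this
    have := (Finset.mem_filter.mp ha).2
    omega
  obtain ⟨_, hxφ, _, hyφ, hxy⟩ := Finset.one_lt_card.mp hnbr
  obtain ⟨hxφ, hxS⟩ := Finset.mem_sdiff.mp hxφ
  obtain ⟨hyφ, hyS⟩ := Finset.mem_sdiff.mp hyφ
  obtain ⟨x, hx, rfl⟩ := Finset.mem_map.mp hxφ
  obtain ⟨y, hy, rfl⟩ := Finset.mem_map.mp hyφ
  exact ⟨φ a, φ x, φ y, hcS, hxS, hyS, hxy, hadj ((mem_neighborFinset _ _ _).mp hx),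
    hadj ((mem_neighborFinset _ _ _).mp hy)⟩

theorem isDesign_iff : IsDesign G Γ D ↔ (∀ B ∈ D, IsCopy Γ B ∧ B.edgeSet.Nonempty) ∧
    D.PairwiseDisjoint edgeSet ∧ sSup D = G := by
  constructor
  · rintro ⟨hblock, hunique⟩
    refine ⟨fun B hB => (hblock B hB).2, fun B hB B' hB' hne => ?_, ?_⟩
    · refine Set.disjoint_left.mpr fun e he he' => hne ?_
      have heG := edgeSet_mono (hblock B hB).1 he
      exact (hunique e heG).unique ⟨hB, he⟩ ⟨hB', he'⟩
    · refine le_antisymm (sSup_le fun B hB => (hblock B hB).1) fun x y hxy => ?_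
      obtain ⟨B, ⟨hB, hxyB⟩, -⟩ := hunique s(x, y) hxy
      exact sSup_adj.mpr ⟨B, hB, hxyB⟩
  · rintro ⟨hcopy, hdisj, rfl⟩
    refine ⟨fun B hB => ⟨le_sSup hB, hcopy B hB⟩, fun e he => ?_⟩
    rw [edgeSet_sSup] at he
    obtain ⟨_, ⟨B, hB, rfl⟩, heB⟩ := he
    refine ⟨B, ⟨hB, heB⟩, fun B' ⟨hB', heB'⟩ => ?_⟩
    by_contra hne
    exact Set.disjoint_left.mp (hdisj hB' hB hne) heB' heB

theorem IsDesign.sup (h₁ : IsDesign G₁ Γ D₁) (h₂ : IsDesign G₂ Γ D₂)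
    (h : Disjoint G₁.edgeSet G₂.edgeSet) : IsDesign (G₁ ⊔ G₂) Γ (D₁ ∪ D₂) := by
  obtain ⟨hcopy₁, hdisj₁, rfl⟩ := isDesign_iff.mp h₁
  obtain ⟨hcopy₂, hdisj₂, rfl⟩ := isDesign_iff.mp h₂
  refine isDesign_iff.mpr ⟨fun B hB => hB.elim (hcopy₁ B) (hcopy₂ B), ?_, sSup_union⟩
  refine Set.pairwise_union.mpr ⟨hdisj₁, hdisj₂, fun B hB B' hB' _ => ?_⟩
  have hBB' : Disjoint B.edgeSet B'.edgeSet :=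
    h.mono (edgeSet_mono (le_sSup hB)) (edgeSet_mono (le_sSup hB'))
  exact ⟨hBB', hBB'.symm⟩

theorem isDesign_singleton (hB : IsCopy Γ B) (hne : B.edgeSet.Nonempty) :
    IsDesign B Γ {B} :=
  isDesign_iff.mpr ⟨fun _ h => (Set.mem_singleton_iff.mp h) ▸ ⟨hB, hne⟩,
    Set.pairwise_singleton _ _, sSup_singleton⟩

theorem isDesign_bot : IsDesign (⊥ : SimpleGraph β) Γ ∅ :=
  isDesign_iff.mpr ⟨by simp, Set.pairwise_empty _, sSup_empty⟩

theorem IsDesign.isDesign_sSup_image {α' : Type*} {Γ' : SimpleGraph α'}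
    (hD : IsDesign G Γ D) {f : SimpleGraph β → SimpleGraph β}
    (hf : ∀ B ∈ D, f B ≤ B ∧ IsCopy Γ' (f B) ∧ (f B).edgeSet.Nonempty) :
    IsDesign (sSup (f '' D)) Γ' (f '' D) := by
  refine isDesign_iff.mpr ⟨fun _ ⟨B, hB, hfB⟩ => hfB ▸ (hf B hB).2, ?_, rfl⟩
  rintro _ ⟨B, hB, rfl⟩ _ ⟨B', hB', rfl⟩ hne
  exact ((isDesign_iff.mp hD).2.1 hB hB' fun h => hne (h ▸ rfl)).mono
    (edgeSet_mono (hf B hB).1) (edgeSet_mono (hf B' hB').1)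

theorem IsDesign.finite (hD : IsDesign G Γ D) (hG : G.edgeSet.Finite) : D.Finite := by
  refine Set.Finite.of_finite_image (f := edgeSet) ?_ edgeSet_injective.injOn
  refine hG.finite_subsets.subset ?_
  rintro _ ⟨B, hB, rfl⟩
  exact edgeSet_mono (hD.1 B hB).1

theorem IsDesign.ncard_edgeSet (hD : IsDesign G Γ D) (hG : G.edgeSet.Finite) :
    G.edgeSet.ncard = D.ncard * Γ.edgeSet.ncard := by
  have hfin := hD.finite hG
  obtain ⟨hcopy, hdisj, rfl⟩ := isDesign_iff.mp hD
  rw [edgeSet_sSup, Set.sUnion_image,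
    hfin.ncard_biUnion (fun B hB => hG.subset (edgeSet_mono (le_sSup hB))) hdisj,
    finsum_mem_congr rfl fun B hB => (hcopy B hB).1.ncard_edgeSet, ← finsum_one (s := D),
    finsum_mem_mul]
  simp_rw [one_mul]

end Designs

section Cherries

variable {V : Type*} {G : SimpleGraph V} {c x y u w h : V}

def cherry (c x y : V) : SimpleGraph V := fromEdgeSet {s(c, x), s(c, y)}

theorem cherry_adj :
    (cherry c x y).Adj u w ↔ (s(u, w) = s(c, x) ∨ s(u, w) = s(c, y)) ∧ u ≠ w := by
  simp [cherry]

theorem mem_of_cherry_adj (huw : (cherry c x y).Adj u w) : u = c ∨ u = x ∨ u = y := by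
  rcases (cherry_adj.mp huw).1 with h | h <;>
    rcases Sym2.eq_iff.mp h with ⟨rfl, -⟩ | ⟨rfl, -⟩ <;> simp

theorem cherry_le (hx : G.Adj c x) (hy : G.Adj c y) : cherry c x y ≤ G := by
  intro u w huw
  rcases (cherry_adj.mp huw).1 with h | h <;>
    rcases Sym2.eq_iff.mp h with ⟨rfl, rfl⟩ | ⟨rfl, rfl⟩
  exacts [hx, hx.symm, hy, hy.symm]

theorem edgeSet_cherry (hx : c ≠ x) (hy : c ≠ y) :
    (cherry c x y).edgeSet = {s(c, x), s(c, y)} := by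
  ext e
  simp only [cherry, edgeSet_fromEdgeSet, Set.mem_sdiff, Set.mem_insert_iff,
    Set.mem_singleton_iff, Sym2.mem_diagSet]
  constructor
  · exact fun h => h.1
  · rintro (rfl | rfl) <;> simpa

theorem edgeSet_cherry_nonempty (hx : c ≠ x) : (cherry c x y).edgeSet.Nonempty :=
  ⟨s(c, x), cherry_adj.mpr ⟨Or.inl rfl, hx⟩⟩

theorem ncard_edgeSet_cherry (hx : c ≠ x) (hy : c ≠ y) (hxy : x ≠ y) :
    (cherry c x y).edgeSet.ncard = 2 := by
  rw [edgeSet_cherry hx hy, Set.ncard_pair (by simp [hxy, hx.symm])]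

theorem isCopy_pathGraph_three_cherry (hx : c ≠ x) (hy : c ≠ y) (hxy : x ≠ y) :
    IsCopy (pathGraph 3) (cherry c x y) := by
  refine isCopy_iff_exists_map_eq.mpr ⟨⟨![x, c, y], ?_⟩, ?_⟩
  · intro i j hij
    fin_cases i <;> fin_cases j <;> simp_all [eq_comm]
  · ext u w
    simp only [map_adj', cherry_adj, Fin.exists_fin_succ, pathGraph_adj, Sym2.eq_iff]
    aesop

theorem ncard_edgeSet_pathGraph_three : (pathGraph 3).edgeSet.ncard = 2 := by
  rw [← (isCopy_pathGraph_three_cherry (c := 1) (x := 0) (y := 2) one_ne_zero (by simp)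
    (by simp)).ncard_edgeSet, ncard_edgeSet_cherry] <;> simp

end Cherries

section Hub

variable {V : Type*} {G H : SimpleGraph V} {h : V}

def IsHub (G : SimpleGraph V) (h : V) : Prop :=
  ∀ ⦃x y⦄, G.Adj x y → x ≠ h → G.Adj h x

/- Remove two edges at some `c ≠ h` avoiding `h` if there are such; otherwise remove an edge
`xy` avoiding `h` together with `xh`, after which `x` is isolated; otherwise every edge
contains `h`. -/
theorem IsHub.exists_cherry (hG : IsHub G h) (hcard : 1 < G.edgeSet.ncard) :
    ∃ c x y, x ≠ y ∧ G.Adj c x ∧ G.Adj c y ∧ IsHub (G \ cherry c x y) h := by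
  by_cases hA : ∃ c x y, c ≠ h ∧ x ≠ h ∧ y ≠ h ∧ x ≠ y ∧ G.Adj c x ∧ G.Adj c y
  · obtain ⟨c, x, y, hc, hx, hy, hxy, hcx, hcy⟩ := hA
    refine ⟨c, x, y, hxy, hcx, hcy, fun u w huw hu => ⟨hG huw.1 hu, fun hhu => ?_⟩⟩
    rcases mem_of_cherry_adj hhu with rfl | rfl | rfl <;> simp_all
  by_cases hB : ∃ x y, x ≠ h ∧ y ≠ h ∧ G.Adj x y
  · obtain ⟨x, y, hx, hy, hxy⟩ := hB
    refine ⟨x, y, h, hy, hxy, (hG hxy hx).symm,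
      fun u w huw hu => ⟨hG huw.1 hu, fun hhu => ?_⟩⟩
    obtain ⟨hhu | hhu, -⟩ := cherry_adj.mp hhu
    · rcases Sym2.eq_iff.mp hhu with ⟨hhx, -⟩ | ⟨hhy, -⟩
      exacts [hx hhx.symm, hy hhy.symm]
    · obtain rfl : u = x := Sym2.congr_right.mp (hhu.trans Sym2.eq_swap)
      obtain ⟨huw, hnot⟩ := huw
      have hwy : w ≠ y := by rintro rfl; exact hnot (cherry_adj.mpr ⟨by simp, hxy.ne⟩)
      have hwh : w ≠ h := by rintro rfl; exact hnot (cherry_adj.mpr ⟨by simp, huw.ne⟩)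
      exact hA ⟨u, y, w, hu, hy, hwh, hwy.symm, hxy, huw⟩
  · push Not at hB
    have hstar : ∀ e ∈ G.edgeSet, ∃ x, G.Adj h x ∧ e = s(h, x) := by
      rintro ⟨a, b⟩ hab
      by_cases ha : a = h
      · exact ⟨b, ha ▸ hab, by rw [ha]⟩
      · obtain rfl : b = h := by_contra fun hb => hB a b ha hb hab
        exact ⟨a, hG hab ha, Sym2.eq_swap⟩
    obtain ⟨e, f, he, hf, hef⟩ :=
      (Set.one_lt_ncard_iff (Set.finite_of_ncard_pos (by omega))).mp hcard
    obtain ⟨x, hx, rfl⟩ := hstar e he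
    obtain ⟨y, hy, rfl⟩ := hstar f hf
    refine ⟨h, x, y, fun hxy => hef (by rw [hxy]), hx, hy, fun u w huw hu => ?_⟩
    obtain rfl : w = h := by
      by_contra hw
      exact hB u w hu hw huw.1
    exact huw.symm

theorem IsHub.exists_isDesign_pathGraph_three (hG : IsHub G h) (hfin : G.edgeSet.Finite)
    (heven : Even G.edgeSet.ncard) : ∃ D, IsDesign G (pathGraph 3) D := by
  induction hn : G.edgeSet.ncard using Nat.strong_induction_on generalizing G with
  | _ n ih =>
  obtain hn1 | hn1 := Nat.lt_or_ge 1 n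
  · obtain ⟨c, x, y, hxy, hx, hy, hG'⟩ := hG.exists_cherry (hn ▸ hn1)
    have hle := cherry_le hx hy
    have hcard : (G \ cherry c x y).edgeSet.ncard = n - 2 := by
      rw [edgeSet_sdiff, Set.ncard_sdiff' (edgeSet_mono hle) hfin,
        ncard_edgeSet_cherry hx.ne hy.ne hxy, hn]
    obtain ⟨D, hD⟩ := ih (n - 2) (by omega) hG' (hfin.subset (edgeSet_mono sdiff_le))
      (by rw [hcard]; exact (Nat.even_sub (by omega)).mpr (by simp [← hn, heven])) hcard
    refine ⟨D ∪ {cherry c x y}, ?_⟩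
    have hsup := hD.sup (isDesign_singleton (isCopy_pathGraph_three_cherry hx.ne hy.ne hxy)
      (edgeSet_cherry_nonempty hx.ne)) (by rw [edgeSet_sdiff]; exact Set.disjoint_sdiff_left)
    rwa [sdiff_sup_cancel hle] at hsup
  · obtain rfl : G = ⊥ := by
      rw [← edgeSet_eq_empty, ← Set.ncard_eq_zero hfin]
      have := Nat.even_iff.mp heven
      omega
    exact ⟨∅, isDesign_bot⟩

theorem IsHub.exists_isDesign_pathGraph_three_superset (hG : IsHub G h)
    (hfin : G.edgeSet.Finite) (heven : Even G.edgeSet.ncard) (hHG : H ≤ G)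
    {C : Set (SimpleGraph V)} (hC : IsDesign H (pathGraph 3) C) (hH : ∀ x, ¬ H.Adj h x) :
    ∃ D, C ⊆ D ∧ IsDesign G (pathGraph 3) D := by
  have hL : IsHub (G \ H) h := fun x y hxy hx => ⟨hG hxy.1 hx, hH x⟩
  have hsplit := Set.ncard_sdiff_add_ncard_of_subset (edgeSet_mono hHG) hfin
  rw [hC.ncard_edgeSet (hfin.subset (edgeSet_mono hHG)), ncard_edgeSet_pathGraph_three] at hsplit
  obtain ⟨P, hP⟩ := hL.exists_isDesign_pathGraph_three (hfin.subset (edgeSet_mono sdiff_le))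
    (by rw [edgeSet_sdiff]; exact (Nat.even_add.mp (hsplit ▸ heven)).mpr (by simp))
  refine ⟨C ∪ P, Set.subset_union_left, ?_⟩
  have hsup := hC.sup hP (by rw [edgeSet_sdiff]; exact Set.disjoint_sdiff_right)
  rwa [sup_sdiff_cancel_right hHG] at hsup

end Hub

section CompleteGraph

theorem even_choose_two {n : ℕ} (hn : n % 4 = 0 ∨ n % 4 = 1) : Even (n.choose 2) := by
  have h2 : n.choose 2 * 2 = n * (n - 1) := by
    rw [Nat.choose_two_right, Nat.div_two_mul_two_of_even (Nat.even_mul_pred_self n)]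
  have h4 : 4 ∣ n * (n - 1) := by
    rcases hn with h | h
    · exact (Nat.dvd_of_mod_eq_zero h).mul_right _
    · exact (show 4 ∣ n - 1 by omega).mul_left _
  rw [← h2] at h4
  rw [even_iff_two_dvd]
  omega

theorem kon_iio_eq_map (n : ℕ) :
    Kon (Set.Iio n) = (⊤ : SimpleGraph (Fin n)).map Fin.valEmbedding := by
  ext x y
  simp only [Kon, map_adj, top_adj, Set.mem_Iio]
  constructor
  · rintro ⟨hxy, hx, hy⟩
    exact ⟨⟨x, hx⟩, ⟨y, hy⟩, fun h => hxy (congrArg Fin.val h), rfl, rfl⟩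
  · rintro ⟨a, b, hab, rfl, rfl⟩
    exact ⟨Fin.val_injective.ne hab, a.2, b.2⟩

theorem finite_edgeSet_kon_iio (n : ℕ) : (Kon (Set.Iio n)).edgeSet.Finite := by
  rw [kon_iio_eq_map, edgeSet_map]
  exact Set.toFinite _

theorem ncard_edgeSet_kon_iio (n : ℕ) : (Kon (Set.Iio n)).edgeSet.ncard = n.choose 2 := by
  rw [(isCopy_iff_exists_map_eq.mpr ⟨_, (kon_iio_eq_map n).symm⟩).ncard_edgeSet,
    ← coe_edgeFinset, Set.ncard_coe_finset, card_edgeFinset_top_eq_card_choose_two,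
    Fintype.card_fin]

theorem kon_mono {s t : Set ℕ} (h : s ⊆ t) : Kon s ≤ Kon t :=
  fun _ _ ⟨hne, hx, hy⟩ => ⟨hne, h hx, h hy⟩

theorem isHub_kon_iio_zero (n : ℕ) : IsHub (Kon (Set.Iio n)) 0 :=
  fun x _ ⟨_, hx, _⟩ hx0 => ⟨Ne.symm hx0, lt_of_le_of_lt (Nat.zero_le x) hx, hx⟩

theorem IsCopy.exists_cherry_le_kon_ioo {α : Type*} [Fintype α] {Γ : SimpleGraph α}
    [DecidableRel Γ.Adj] {B : SimpleGraph ℕ} {v : ℕ} (hB : IsCopy Γ B)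
    (hBK : B ≤ Kon (Set.Iio v))
    (hdeg : 5 ≤ (Finset.univ.filter fun a => 6 ≤ Γ.degree a).card) :
    ∃ c x y, x ≠ y ∧ B.Adj c x ∧ B.Adj c y ∧
      cherry c x y ≤ Kon (Set.Ioo 0 (v - 3)) := by
  -- `0` is kept free for the hub; `v - 3, v - 2, v - 1` lie outside `K_{v-3}`.
  set S : Finset ℕ := {0, v - 3, v - 2, v - 1}
  have hS : S.card ≤ 4 := Finset.card_le_four
  obtain ⟨c, x, y, hc, hx, hy, hxy, hcx, hcy⟩ :=
    hB.exists_cherry_avoiding (S := S) (d := 6) (by omega) (by omega)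
  have hinner : ∀ z w, B.Adj z w → z ∉ S → w ∉ S →
      (Kon (Set.Ioo 0 (v - 3))).Adj z w := by
    intro z w hzw hz hw
    obtain ⟨hne, hzv, hwv⟩ := hBK hzw
    simp only [S, Finset.mem_insert, Finset.mem_singleton, not_or, Set.mem_Iio] at hz hw hzv hwv
    exact ⟨hne, Set.mem_Ioo.mpr (by omega), Set.mem_Ioo.mpr (by omega)⟩
  exact ⟨c, x, y, hxy, hcx, hcy, cherry_le (hinner _ _ hcx hc hx) (hinner _ _ hcy hc hy)⟩

end CompleteGraph

theorem stmt7_general {α : Type*} [Fintype α] (Γ : SimpleGraph α)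
    [DecidableRel Γ.Adj]
    (hdeg : 5 ≤ (Finset.univ.filter fun a => 6 ≤ Γ.degree a).card)
    (v : ℕ) (hv : v % 4 = 0 ∨ v % 4 = 3)
    (D : Set (SimpleGraph ℕ)) (hD : IsDesign (Kon (Set.Iio v)) Γ D) :
    ∃ D' : Set (SimpleGraph ℕ),
      IsDesign (Kon (Set.Iio (v - 3))) (pathGraph 3) D' ∧
      ∃ f, IsDownlink D D' f := by
  have hpick B (hB : B ∈ D) := (hD.1 B hB).2.1.exists_cherry_le_kon_ioo (hD.1 B hB).1 hdeg
  choose! c x y hxy hcx hcy hK using hpick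
  set f := fun B => cherry (c B) (x B) (y B)
  have hblock : ∀ B ∈ D, f B ≤ B ∧ IsCopy (pathGraph 3) (f B) ∧ (f B).edgeSet.Nonempty :=
    fun B hB => ⟨cherry_le (hcx B hB) (hcy B hB),
      isCopy_pathGraph_three_cherry (hcx B hB).ne (hcy B hB).ne (hxy B hB),
      edgeSet_cherry_nonempty (hcx B hB).ne⟩
  have hle : sSup (f '' D) ≤ Kon (Set.Iio (v - 3)) :=
    sSup_le <| Set.forall_mem_image.mpr fun B hB =>
      (hK B hB).trans (kon_mono Set.Ioo_subset_Iio_self)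
  have havoid : ∀ z, ¬ (sSup (f '' D)).Adj 0 z := by
    rintro z ⟨_, ⟨B, hB, rfl⟩, h0z⟩
    exact lt_irrefl 0 (hK B hB h0z).2.1.1
  obtain ⟨D', hCD', hD'⟩ :=
    (isHub_kon_iio_zero (v - 3)).exists_isDesign_pathGraph_three_superset
      (finite_edgeSet_kon_iio _)
      (by rw [ncard_edgeSet_kon_iio]; exact even_choose_two (by omega))
      hle (hD.isDesign_sSup_image hblock) havoid
  exact ⟨D', hD', f, fun B hB => ⟨hCD' ⟨B, hB, rfl⟩, (hblock B hB).1⟩⟩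

/-- If `Γ` has at least 7 vertices and at least 5 vertices of degree ≥ 6 and
`v ≡ 0, 3 (mod 4)`, then every `(K_v,Γ)`-design can be down-linked to a
`(K_{v-3},P₃)`-design. -/
theorem stmt7 {α : Type*} [Fintype α] [DecidableEq α] (Γ : SimpleGraph α)
    [DecidableRel Γ.Adj] (hcard : 7 ≤ Fintype.card α)
    (hdeg : 5 ≤ (Finset.univ.filter fun a => 6 ≤ Γ.degree a).card)
    (v : ℕ) (hv : v % 4 = 0 ∨ v % 4 = 3)
    (D : Set (SimpleGraph ℕ)) (hD : IsDesign (Kon (Set.Iio v)) Γ D) :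
    ∃ D' : Set (SimpleGraph ℕ),
      IsDesign (Kon (Set.Iio (v - 3))) (pathGraph 3) D' ∧
      ∃ f, IsDownlink D D' f :=
  stmt7_general Γ hdeg v hv D hD
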